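/- Let D ≥ 1 and let ζ_0, …, ζ_D be the D+1 distinct (D+1)-th roots of unity. Then the vectors w_ζ := (D+1)·ζ^D·(ζ, 2ζ², 3ζ³, …, Dζ^D) ∈ ℂ^{D} for ζ ∈ {ζ_0,…,ζ_D} span a ℂ-linear subspace of dimension D, and the vectors w'_ζ := (D+1)·ζ^D·(1, ζ/2, ζ²/3, …, ζ^D/(D+1)) ∈ ℂ^{D+1} are linearly independent over ℂ. -/

import Mathlib

/-! Both families are rows of a rectangular Vandermonde matrix in the distinct nodes `ζ`,
rescaled by nonzero factors on rows (`(D + 1) ζ ^ D`, times `ζ` in the first family) and on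
columns (`k + 1`, resp. `1 / (k + 1)`). Distinct nodes make every leading square Vandermonde
minor invertible, so such rows are independent as long as there are at most as many as columns:
the `D + 1` vectors in `ℂ^(D+1)` are independent, and any `D` of the `D + 1` vectors in `ℂ^D`
already span it. -/

open Module Submodule

lemma Complex.natCard_subtype_pow_eq_one {n : ℕ} (hn : n ≠ 0) :
    Nat.card {ζ : ℂ // ζ ^ n = 1} = n := by
  calc Nat.card {ζ : ℂ // ζ ^ n = 1}
      = Nat.card (Polynomial.nthRootsFinset n (1 : ℂ)) := Nat.card_congr <|
        Equiv.subtypeEquivRight fun ζ => (Polynomial.mem_nthRootsFinset hn.bot_lt (1 : ℂ)).symm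
    _ = n := by
      rw [Nat.card_eq_finsetCard, (Complex.isPrimitiveRoot_exp n hn).card_nthRootsFinset]

section RectangularVandermonde

variable {R : Type*} [CommRing R] [IsDomain R] {m n : ℕ}

theorem linearIndependent_mul_mul_pow {x a : Fin m → R} {c : Fin n → R}
    (hx : Function.Injective x) (ha : ∀ i, a i ≠ 0) (hc : ∀ k, c k ≠ 0) (hmn : m ≤ n) :
    LinearIndependent R fun i (k : Fin n) => a i * c k * x i ^ (k : ℕ) := by
  rw [Fintype.linearIndependent_iff]
  intro g hg i
  have hsum : ∀ k : Fin m, ∑ j, g j * a j * x j ^ (k : ℕ) = 0 := fun k => by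
    have hk := congrFun hg (Fin.castLE hmn k)
    simp only [Finset.sum_apply, Pi.smul_apply, smul_eq_mul, Pi.zero_apply] at hk
    refine (mul_eq_zero.mp ?_).resolve_left (hc (Fin.castLE hmn k))
    rw [Finset.mul_sum, ← hk]
    exact Finset.sum_congr rfl fun j _ => by simp only [Fin.val_castLE]; ring
  have hga := congrFun (Matrix.eq_zero_of_forall_pow_sum_mul_pow_eq_zero hx hsum) i
  exact (mul_eq_zero.mp hga).resolve_right (ha i)

theorem linearIndependent_of_eq_mul_mul_pow {ι : Type*} [Finite ι] {v : ι → Fin n → R}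
    {x a : ι → R} {c : Fin n → R} (hv : ∀ i k, v i k = a i * c k * x i ^ (k : ℕ))
    (hx : Function.Injective x) (ha : ∀ i, a i ≠ 0) (hc : ∀ k, c k ≠ 0)
    (hn : Nat.card ι ≤ n) :
    LinearIndependent R v := by
  obtain rfl : v = fun i k => a i * c k * x i ^ (k : ℕ) := funext fun i => funext (hv i)
  let e := (Finite.equivFin ι).symm
  rw [← linearIndependent_equiv e]
  exact linearIndependent_mul_mul_pow (hx.comp e.injective) (fun i => ha (e i)) hc hn

theorem span_range_eq_top_of_eq_mul_mul_pow {K ι : Type*} [Field K] [Finite ι]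
    {v : ι → Fin n → K} {x a : ι → K} {c : Fin n → K}
    (hv : ∀ i k, v i k = a i * c k * x i ^ (k : ℕ)) (hx : Function.Injective x)
    (ha : ∀ i, a i ≠ 0) (hc : ∀ k, c k ≠ 0) (hn : n ≤ Nat.card ι) :
    span K (Set.range v) = ⊤ := by
  obtain rfl : v = fun i k => a i * c k * x i ^ (k : ℕ) := funext fun i => funext (hv i)
  let f : Fin n ↪ ι := (Fin.castLEEmb hn).trans (Finite.equivFin ι).symm.toEmbedding
  have hli := linearIndependent_mul_mul_pow (x := x ∘ f) (a := a ∘ f) (hx.comp f.injective)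
    (fun i => ha (f i)) hc le_rfl
  refine eq_top_iff.2 <| (hli.span_eq_top_of_card_eq_finrank' ?_).ge.trans (span_mono ?_)
  · simp
  · rintro _ ⟨i, rfl⟩
    exact ⟨f i, rfl⟩

end RectangularVandermonde

theorem stmt_5_general (D : ℕ) :
    Module.finrank ℂ (Submodule.span ℂ
      (Set.range (fun ζ : {ζ : ℂ // ζ ^ (D + 1) = 1} =>
        (fun k : Fin D => ((D : ℂ) + 1) * ζ.1 ^ D * (((k : ℕ) : ℂ) + 1) * ζ.1 ^ ((k : ℕ) + 1))))) = D ∧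
    LinearIndependent ℂ (fun ζ : {ζ : ℂ // ζ ^ (D + 1) = 1} =>
      (fun k : Fin (D + 1) => ((D : ℂ) + 1) * ζ.1 ^ D * ζ.1 ^ (k : ℕ) / (((k : ℕ) : ℂ) + 1))) := by
  have hcard := Complex.natCard_subtype_pow_eq_one D.succ_ne_zero
  have : Finite {ζ : ℂ // ζ ^ (D + 1) = 1} :=
    Nat.finite_of_card_ne_zero (hcard ▸ D.succ_ne_zero)
  have hζ : ∀ ζ : {ζ : ℂ // ζ ^ (D + 1) = 1}, ζ.1 ≠ 0 := fun ζ h0 => by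
    simpa [h0] using ζ.2
  have hD : (D : ℂ) + 1 ≠ 0 := D.cast_add_one_ne_zero
  have hk : ∀ k : ℕ, (k : ℂ) + 1 ≠ 0 := Nat.cast_add_one_ne_zero
  constructor
  · rw [span_range_eq_top_of_eq_mul_mul_pow
      (a := fun ζ : {ζ : ℂ // ζ ^ (D + 1) = 1} => ((D : ℂ) + 1) * ζ.1 ^ D * ζ.1)
      (c := fun k => ((k : ℕ) : ℂ) + 1) (fun ζ k => by ring) Subtype.val_injective
      (fun ζ => mul_ne_zero (mul_ne_zero hD (pow_ne_zero _ (hζ ζ))) (hζ ζ)) (fun k => hk k)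
      (hcard ▸ D.le_succ), finrank_top, finrank_fin_fun]
  · exact linearIndependent_of_eq_mul_mul_pow
      (a := fun ζ : {ζ : ℂ // ζ ^ (D + 1) = 1} => ((D : ℂ) + 1) * ζ.1 ^ D)
      (c := fun k => (((k : ℕ) : ℂ) + 1)⁻¹) (fun ζ k => by ring) Subtype.val_injective
      (fun ζ => mul_ne_zero hD (pow_ne_zero _ (hζ ζ))) (fun k => inv_ne_zero (hk k)) hcard.le

theorem stmt_5 (D : ℕ) (hD : 1 ≤ D) :
    Module.finrank ℂ (Submodule.span ℂ
      (Set.range (fun ζ : {ζ : ℂ // ζ ^ (D + 1) = 1} =>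
        (fun k : Fin D => ((D : ℂ) + 1) * ζ.1 ^ D * (((k : ℕ) : ℂ) + 1) * ζ.1 ^ ((k : ℕ) + 1))))) = D ∧
    LinearIndependent ℂ (fun ζ : {ζ : ℂ // ζ ^ (D + 1) = 1} =>
      (fun k : Fin (D + 1) => ((D : ℂ) + 1) * ζ.1 ^ D * ζ.1 ^ (k : ℕ) / (((k : ℕ) : ℂ) + 1))) :=
  stmt_5_general D
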